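/- Let H be a connected finite simple graph of order n₂ ≥ 2 and maximum degree Δ. If Δ = n₂ − 1, then dim_s(K₁ + H) = dim_s(H) + 1. -/

import Mathlib

open SimpleGraph

/-- A vertex `w` strongly resolves the pair `u`, `v` if `v` lies on some shortest `u`–`w`
path or `u` lies on some shortest `v`–`w` path. -/
def StronglyResolves {V : Type*} (G : SimpleGraph V) (w u v : V) : Prop :=
  G.dist u w = G.dist u v + G.dist v w ∨ G.dist v w = G.dist v u + G.dist u w

/-- `S` is a strong resolving set for `G` if every pair of distinct vertices is strongly
resolved by some vertex of `S`. -/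
def IsStrongResolvingSet {V : Type*} (G : SimpleGraph V) (S : Set V) : Prop :=
  ∀ u v : V, u ≠ v → ∃ w ∈ S, StronglyResolves G w u v

/-- The strong metric dimension: the minimum cardinality of a strong resolving set. -/
noncomputable def strongDim {V : Type*} (G : SimpleGraph V) [Fintype V] : ℕ :=
  sInf {k | ∃ S : Finset V, IsStrongResolvingSet G ↑S ∧ S.card = k}

/-- The closed neighborhood of a vertex. -/
def closedNbhd {V : Type*} (G : SimpleGraph V) (v : V) : Set V :=
  insert v (G.neighborSet v)

/-- A twin-free clique: a clique containing no pair of true twins. -/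
def IsTwinFreeClique {V : Type*} (G : SimpleGraph V) (X : Finset V) : Prop :=
  G.IsClique ↑X ∧ ∀ u ∈ X, ∀ v ∈ X, u ≠ v → closedNbhd G u ≠ closedNbhd G v

/-- The twin-free clique number: maximum cardinality of a twin-free clique. -/
noncomputable def twinFreeCliqueNum {V : Type*} (G : SimpleGraph V) [Fintype V] : ℕ :=
  sSup {k | ∃ X : Finset V, IsTwinFreeClique G X ∧ X.card = k}

/-- Adjacency relation of the join of two graphs. -/
def joinAdj {V W : Type*} (G : SimpleGraph V) (H : SimpleGraph W) :
    V ⊕ W → V ⊕ W → Prop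
  | Sum.inl a, Sum.inl b => G.Adj a b
  | Sum.inr a, Sum.inr b => H.Adj a b
  | Sum.inl _, Sum.inr _ => True
  | Sum.inr _, Sum.inl _ => True

/-- The join `G + H`: disjoint union of `G` and `H` plus all edges between them. -/
def joinGraph {V W : Type*} (G : SimpleGraph V) (H : SimpleGraph W) :
    SimpleGraph (V ⊕ W) where
  Adj := joinAdj G H
  symm := by
    constructor
    rintro (a | a) (b | b) h
    · exact G.adj_symm h
    · trivial
    · trivial
    · exact H.adj_symm h
  loopless := by
    constructor
    rintro (a | a) h
    · exact G.irrefl h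
    · exact H.irrefl h

/-- Adjacency relation of the corona product `G ⊙ H`. -/
def coronaAdj {V W : Type*} (G : SimpleGraph V) (H : SimpleGraph W) :
    V ⊕ V × W → V ⊕ V × W → Prop
  | Sum.inl a, Sum.inl b => G.Adj a b
  | Sum.inr p, Sum.inr q => p.1 = q.1 ∧ H.Adj p.2 q.2
  | Sum.inl a, Sum.inr q => a = q.1
  | Sum.inr p, Sum.inl b => p.1 = b

/-- The corona product `G ⊙ H`: one copy of `G` and one copy of `H` for each vertex of
`G`, with the `i`-th vertex of `G` joined to every vertex of the `i`-th copy of `H`. -/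
def corona {V W : Type*} (G : SimpleGraph V) (H : SimpleGraph W) :
    SimpleGraph (V ⊕ V × W) where
  Adj := coronaAdj G H
  symm := by
    constructor
    rintro (a | p) (b | q) h
    · exact G.adj_symm h
    · exact h.symm
    · exact h.symm
    · exact ⟨h.1.symm, H.adj_symm h.2⟩
  loopless := by
    constructor
    rintro (a | p) h
    · exact G.irrefl h
    · exact H.irrefl h.2

/-- The disjoint union of copies of `H`, one copy for each element of `V`. -/
def copies (V : Type*) {W : Type*} (H : SimpleGraph W) : SimpleGraph (V × W) where
  Adj p q := p.1 = q.1 ∧ H.Adj p.2 q.2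
  symm := ⟨fun _ _ h => ⟨h.1.symm, h.2.symm⟩⟩
  loopless := ⟨fun p h => H.irrefl h.2⟩

/-- The algebraic connectivity: the second smallest eigenvalue (with multiplicity,
in nondecreasing order) of the Laplacian matrix. -/
noncomputable def algebraicConnectivity {V : Type*} (G : SimpleGraph V) [Fintype V]
    [DecidableEq V] [DecidableRel G.Adj] : ℝ :=
  (((Finset.univ.val.map ((G.posSemidef_lapMatrix ℝ).isHermitian.eigenvalues)).sort
    (· ≤ ·)).getD 1 0)

/-!
A universal vertex `x` of `H` exists because `Δ = n₂ − 1`. In `K₁ + H` the apex `c` and `x`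
are true twins, both adjacent to every other vertex. Hence distances between vertices of `H` are
the same in `H` and in `K₁ + H`, and `c` strongly resolves no pair of vertices of `H`, so adding
`c` to a strong resolving set of `H` gives one of `K₁ + H`. Conversely, only `c` and `x` resolve
the pair `{c, x}`, so a strong resolving set `S` of `K₁ + H` contains one of them, and the
vertices of `H` in `S` resolve `H`. If `c ∉ S`, then `x` is even redundant there: `x` resolves
no pair avoiding `x`, and a vertex resolving `{u, c}` also resolves `{u, x}`.
-/

open SimpleGraph Finset

section StrongResolving

variable {V : Type*} {G : SimpleGraph V} {u v w x : V}

lemma stronglyResolves_left (G : SimpleGraph V) (u v : V) : StronglyResolves G u u v :=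
  Or.inr (by rw [dist_self, add_zero])

lemma stronglyResolves_right (G : SimpleGraph V) (u v : V) : StronglyResolves G v u v :=
  Or.inl (by rw [dist_self, add_zero])

lemma StronglyResolves.symm (h : StronglyResolves G w u v) : StronglyResolves G w v u :=
  Or.symm h

lemma not_stronglyResolves_of_dist_eq (hr : G.Reachable u v) (huv : u ≠ v)
    (h : G.dist u w = G.dist v w) : ¬StronglyResolves G w u v := by
  have := hr.pos_dist_of_ne huv
  rw [StronglyResolves, G.dist_comm (u := v) (v := u)]
  omega

lemma stronglyResolves_congr_right {v' : V} (hw : G.dist v w = G.dist v' w)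
    (hu : G.dist u v = G.dist u v') :
    StronglyResolves G w u v ↔ StronglyResolves G w u v' := by
  rw [StronglyResolves, StronglyResolves, G.dist_comm (u := v) (v := u),
    G.dist_comm (u := v') (v := u), hw, hu]

lemma SimpleGraph.IsUniversal.dist_eq_one (hx : G.IsUniversal x) (h : x ≠ v) :
    G.dist x v = 1 :=
  dist_eq_one_iff_adj.mpr (hx h)

lemma SimpleGraph.IsUniversal.not_stronglyResolves (hx : G.IsUniversal x) (hu : x ≠ u)
    (hv : x ≠ v) (huv : u ≠ v) : ¬StronglyResolves G x u v :=
  not_stronglyResolves_of_dist_eq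
    ((Reachable.of_isUniversal u hx).symm.trans (Reachable.of_isUniversal v hx)) huv
    (by rw [dist_comm, hx.dist_eq_one hu, dist_comm, hx.dist_eq_one hv])

lemma strongDim_le_card [Fintype V] {S : Finset V} (h : IsStrongResolvingSet G (S : Set V)) :
    strongDim G ≤ #S :=
  Nat.sInf_le ⟨S, h, rfl⟩

lemma exists_isStrongResolvingSet_card_eq_strongDim [Fintype V] (G : SimpleGraph V) :
    ∃ S : Finset V, IsStrongResolvingSet G (S : Set V) ∧ #S = strongDim G :=
  Nat.sInf_mem (s := {k | ∃ S : Finset V, IsStrongResolvingSet G (S : Set V) ∧ #S = k})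
    ⟨_, univ, fun u v _ ↦ ⟨u, mem_coe.mpr (mem_univ u), stronglyResolves_left G u v⟩, rfl⟩

end StrongResolving

lemma SimpleGraph.dist_eq_two_of_adj_of_adj {V : Type*} {G : SimpleGraph V} {u v w : V}
    (huv : u ≠ v) (hnadj : ¬G.Adj u v) (huw : G.Adj u w) (hwv : G.Adj w v) :
    G.dist u v = 2 := by
  let p : G.Walk u v := .cons huw (.cons hwv .nil)
  have hle : G.dist u v ≤ 2 := dist_le p
  have hlt : 1 < G.dist u v := p.reachable.one_lt_dist_of_ne_of_not_adj huv hnadj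
  omega

lemma SimpleGraph.exists_isUniversal_of_maxDegree_eq {V : Type*} [Fintype V] [Nonempty V]
    {G : SimpleGraph V} [DecidableRel G.Adj] (h : G.maxDegree = Fintype.card V - 1) :
    ∃ x, G.IsUniversal x := by
  obtain ⟨x, hx⟩ := G.exists_maximal_degree_vertex
  exact ⟨x, (G.degree_eq_card_sub_one x).mp (hx.symm.trans h)⟩

section Join

variable {V W : Type*} {G : SimpleGraph V} {H : SimpleGraph W} {x : W}

lemma joinGraph_adj_inl_inr (a : V) (b : W) : (joinGraph G H).Adj (.inl a) (.inr b) :=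
  trivial

lemma SimpleGraph.IsUniversal.joinGraph_inl {a : V} (ha : G.IsUniversal a) :
    (joinGraph G H).IsUniversal (.inl a) := by
  rintro (b | b) hab
  · exact ha fun h ↦ hab (congrArg _ h)
  · trivial

lemma SimpleGraph.IsUniversal.joinGraph_inr (hx : H.IsUniversal x) :
    (joinGraph G H).IsUniversal (.inr x) := by
  rintro (b | b) hxb
  · trivial
  · exact hx fun h ↦ hxb (congrArg _ h)

lemma reachable_joinGraph_inr [Nonempty V] (a b : W) :
    (joinGraph G H).Reachable (.inr a) (.inr b) :=
  have c := Classical.arbitrary V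
  (joinGraph_adj_inl_inr c a).reachable.symm.trans (joinGraph_adj_inl_inr c b).reachable

lemma dist_joinGraph_inr_inr [Nonempty V] (hx : H.IsUniversal x) (a b : W) :
    (joinGraph G H).dist (.inr a) (.inr b) = H.dist a b := by
  obtain rfl | hab := eq_or_ne a b
  · simp only [dist_self]
  by_cases hadj : H.Adj a b
  · rw [dist_eq_one_iff_adj.mpr hadj,
      (dist_eq_one_iff_adj (G := joinGraph G H) (u := .inr a) (v := .inr b)).mpr hadj]
  have hxa : x ≠ a := by rintro rfl; exact hadj (hx hab)
  have hxb : x ≠ b := by rintro rfl; exact hadj (hx hab.symm).symm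
  have c := Classical.arbitrary V
  rw [dist_eq_two_of_adj_of_adj hab hadj (hx hxa).symm (hx hxb),
    dist_eq_two_of_adj_of_adj (G := joinGraph G H) (u := .inr a) (v := .inr b)
      (by simpa using hab) hadj (joinGraph_adj_inl_inr c a).symm (joinGraph_adj_inl_inr c b)]

lemma stronglyResolves_joinGraph_inr_iff [Nonempty V] (hx : H.IsUniversal x) (s u v : W) :
    StronglyResolves (joinGraph G H) (.inr s) (.inr u) (.inr v) ↔ StronglyResolves H s u v := by
  simp only [StronglyResolves, dist_joinGraph_inr_inr hx]

lemma not_stronglyResolves_joinGraph_inl [Nonempty V] (a : V) {u v : W} (huv : u ≠ v) :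
    ¬StronglyResolves (joinGraph G H) (.inl a) (.inr u) (.inr v) :=
  not_stronglyResolves_of_dist_eq (reachable_joinGraph_inr u v) (by simpa using huv)
    (by rw [dist_comm, dist_eq_one_iff_adj.mpr (joinGraph_adj_inl_inr a u), dist_comm,
      dist_eq_one_iff_adj.mpr (joinGraph_adj_inl_inr a v)])

lemma isStrongResolvingSet_joinGraph_disjSum [Fintype V] [Nonempty V] (hx : H.IsUniversal x)
    {S : Finset W} (hS : IsStrongResolvingSet H S) :
    IsStrongResolvingSet (joinGraph G H) ((univ : Finset V).disjSum S : Set (V ⊕ W)) := by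
  rintro (a | a) (b | b) hab
  · exact ⟨.inl a, by simp, stronglyResolves_left _ _ _⟩
  · exact ⟨.inl a, by simp, stronglyResolves_left _ _ _⟩
  · exact ⟨.inl b, by simp, stronglyResolves_right _ _ _⟩
  · obtain ⟨s, hs, hres⟩ := hS a b fun h ↦ hab (congrArg _ h)
    exact ⟨.inr s, by simpa using hs, (stronglyResolves_joinGraph_inr_iff hx s a b).mpr hres⟩

lemma exists_mem_toRight_stronglyResolves {S : Finset (V ⊕ W)}
    (hS : IsStrongResolvingSet (joinGraph G H) (S : Set (V ⊕ W))) {p q : V ⊕ W} (hpq : p ≠ q)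
    (hinl : ∀ a, .inl a ∈ S → ¬StronglyResolves (joinGraph G H) (.inl a) p q) :
    ∃ s ∈ S.toRight, StronglyResolves (joinGraph G H) (.inr s) p q := by
  obtain ⟨a | s, hw, hres⟩ := hS p q hpq
  · exact absurd hres (hinl a hw)
  · exact ⟨s, mem_toRight.mpr hw, hres⟩

lemma isStrongResolvingSet_toRight [Nonempty V] (hx : H.IsUniversal x) {S : Finset (V ⊕ W)}
    (hS : IsStrongResolvingSet (joinGraph G H) (S : Set (V ⊕ W))) :
    IsStrongResolvingSet H (S.toRight : Set W) := by
  intro u v huv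
  obtain ⟨s, hs, hres⟩ := exists_mem_toRight_stronglyResolves hS (p := .inr u) (q := .inr v)
    (by simpa using huv) fun a _ ↦ not_stronglyResolves_joinGraph_inl a huv
  exact ⟨s, hs, (stronglyResolves_joinGraph_inr_iff hx s u v).mp hres⟩

end Join

section JoinUnit

variable {W : Type*} {H : SimpleGraph W} {x : W} {S : Finset (Unit ⊕ W)}

lemma isUniversal_joinGraph_inl_unit :
    (joinGraph (⊥ : SimpleGraph Unit) H).IsUniversal (.inl ()) :=
  IsUniversal.of_subsingleton.joinGraph_inl

lemma stronglyResolves_joinGraph_inl_unit_iff (hx : H.IsUniversal x) {t u : W} (hxt : x ≠ t)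
    (hxu : x ≠ u) :
    StronglyResolves (joinGraph (⊥ : SimpleGraph Unit) H) (.inr t) (.inr u) (.inl ()) ↔
      StronglyResolves H t u x := by
  have hx' := hx.joinGraph_inr (G := (⊥ : SimpleGraph Unit))
  rw [← stronglyResolves_joinGraph_inr_iff (G := (⊥ : SimpleGraph Unit)) hx,
    stronglyResolves_congr_right (v' := .inr x)]
  · rw [isUniversal_joinGraph_inl_unit.dist_eq_one (by simp),
      hx'.dist_eq_one (by simpa using hxt)]
  · rw [dist_comm, isUniversal_joinGraph_inl_unit.dist_eq_one (by simp), dist_comm,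
      hx'.dist_eq_one (by simpa using hxu)]

lemma mem_toRight_of_inl_notMem (hx : H.IsUniversal x)
    (hS : IsStrongResolvingSet (joinGraph (⊥ : SimpleGraph Unit) H) (S : Set (Unit ⊕ W)))
    (hc : .inl () ∉ S) : x ∈ S.toRight := by
  obtain ⟨s, hs, hres⟩ := exists_mem_toRight_stronglyResolves hS (p := .inl ()) (q := .inr x)
    (by simp) fun _ h ↦ absurd h hc
  obtain rfl | hxs := eq_or_ne x s
  · exact hs
  refine absurd hres (not_stronglyResolves_of_dist_eq (joinGraph_adj_inl_inr () x).reachable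
    (by simp) ?_)
  rw [isUniversal_joinGraph_inl_unit.dist_eq_one (by simp),
    (hx.joinGraph_inr (G := ⊥)).dist_eq_one (by simpa using hxs)]

lemma isStrongResolvingSet_toRight_erase [DecidableEq W] (hx : H.IsUniversal x)
    (hS : IsStrongResolvingSet (joinGraph (⊥ : SimpleGraph Unit) H) (S : Set (Unit ⊕ W)))
    (hc : .inl () ∉ S) : IsStrongResolvingSet H (S.toRight.erase x : Set W) := by
  have key : ∀ u v, u ≠ v → x ≠ u →
      ∃ s ∈ S.toRight.erase x, StronglyResolves H s u v := by
    intro u v huv hxu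
    obtain rfl | hxv := eq_or_ne x v
    · obtain ⟨t, ht, hres⟩ :=
        exists_mem_toRight_stronglyResolves hS (p := .inr u) (q := .inl ()) (by simp)
          fun _ h ↦ absurd h hc
      have hxt : x ≠ t := by
        rintro rfl
        exact (hx.joinGraph_inr (G := ⊥)).not_stronglyResolves (by simpa using hxu) (by simp)
          (by simp) hres
      exact ⟨t, mem_erase.mpr ⟨hxt.symm, ht⟩,
        (stronglyResolves_joinGraph_inl_unit_iff hx hxt hxu).mp hres⟩
    · obtain ⟨s, hs, hres⟩ := exists_mem_toRight_stronglyResolves hS (p := .inr u)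
        (q := .inr v) (by simpa using huv) fun _ h ↦ absurd h hc
      rw [stronglyResolves_joinGraph_inr_iff hx] at hres
      have hxs : x ≠ s := by rintro rfl; exact hx.not_stronglyResolves hxu hxv huv hres
      exact ⟨s, mem_erase.mpr ⟨hxs.symm, hs⟩, hres⟩
  intro u v huv
  obtain rfl | hxu := eq_or_ne x u
  · obtain ⟨s, hs, hres⟩ := key v x huv.symm huv
    exact ⟨s, hs, hres.symm⟩
  · exact key u v huv hxu

lemma exists_isStrongResolvingSet_card_lt [DecidableEq W] (hx : H.IsUniversal x)
    (hS : IsStrongResolvingSet (joinGraph (⊥ : SimpleGraph Unit) H) (S : Set (Unit ⊕ W))) :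
    ∃ T : Finset W, IsStrongResolvingSet H (T : Set W) ∧ #T < #S := by
  by_cases hc : .inl () ∈ S
  · refine ⟨S.toRight, isStrongResolvingSet_toRight hx hS, ?_⟩
    have hleft : 0 < #S.toLeft := card_pos.mpr ⟨(), mem_toLeft.mpr hc⟩
    rw [← card_toLeft_add_card_toRight (u := S)]
    omega
  · exact ⟨S.toRight.erase x, isStrongResolvingSet_toRight_erase hx hS hc,
      (card_erase_lt_of_mem (mem_toRight_of_inl_notMem hx hS hc)).trans_le card_toRight_le⟩

end JoinUnit

theorem strongDim_join_K1_eq_strongDim_add_one_general {W : Type*} [Fintype W]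
    (H : SimpleGraph W) [DecidableRel H.Adj] (hH : H.Connected)
    (hd : H.maxDegree = Fintype.card W - 1) :
    strongDim (joinGraph (⊥ : SimpleGraph Unit) H) = strongDim H + 1 := by
  classical
  have := hH.nonempty
  obtain ⟨x, hx⟩ := exists_isUniversal_of_maxDegree_eq hd
  obtain ⟨S, hS, hSdim⟩ := exists_isStrongResolvingSet_card_eq_strongDim H
  obtain ⟨S', hS', hS'dim⟩ :=
    exists_isStrongResolvingSet_card_eq_strongDim (joinGraph (⊥ : SimpleGraph Unit) H)
  obtain ⟨T, hT, hTS'⟩ := exists_isStrongResolvingSet_card_lt hx hS'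
  apply le_antisymm
  · calc strongDim (joinGraph (⊥ : SimpleGraph Unit) H)
        ≤ #(univ.disjSum S) := strongDim_le_card (isStrongResolvingSet_joinGraph_disjSum hx hS)
      _ = strongDim H + 1 := by rw [card_disjSum, card_univ, Fintype.card_unit, hSdim, add_comm]
  · have := strongDim_le_card hT
    omega

/-- Let `H` be a connected graph of order `n₂ ≥ 2` and maximum degree
`Δ = n₂ − 1`. Then `dim_s(K₁ + H) = dim_s(H) + 1`. -/
theorem strongDim_join_K1_eq_strongDim_add_one {W : Type*} [Fintype W]
    (H : SimpleGraph W) [DecidableRel H.Adj] (hH : H.Connected)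
    (hn2 : 2 ≤ Fintype.card W) (hd : H.maxDegree = Fintype.card W - 1) :
    strongDim (joinGraph (⊥ : SimpleGraph Unit) H) = strongDim H + 1 :=
  strongDim_join_K1_eq_strongDim_add_one_general H hH hd
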